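/- arXiv:2303.15447 — 4 statements merged into one kernel-verified Lean document; each statement's English description precedes it below -/
import Mathlib

section
/- Let n ≥ 1, let H be an n × n real symmetric matrix with uᵀ H u > 0 for all nonzero u ∈ ℝⁿ, and let P_f and P_b be n × n real matrices whose operator norms (induced by the Euclidean norm on ℝⁿ) satisfy ‖P_f‖ ≤ 1 and ‖P_b‖ ≤ 1. Let κ ≥ 0, Δx > 0, α ≤ 0, set τ = α/Δx, and define the discrete parallel diffusion operator P_∥ = (τ/2) κ H⁻¹ A, where A = I − (1/2)(P_f + P_b). Then for every vector u ∈ ℝⁿ, uᵀ ( (H P_∥) + (H P_∥)ᵀ ) u ≤ 0. -/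
open scoped Matrix.Norms.L2Operator

open Matrix
open scoped InnerProductSpace

lemma dot_le_of_opNorm_le_one {n : ℕ} (M : Matrix (Fin n) (Fin n) ℝ)
    (hM : ‖M‖ ≤ 1) (u : Fin n → ℝ) : u ⬝ᵥ M *ᵥ u ≤ u ⬝ᵥ u := by
  set v : EuclideanSpace ℝ (Fin n) := WithLp.toLp 2 u with hv
  set w : EuclideanSpace ℝ (Fin n) := WithLp.toLp 2 (M *ᵥ u) with hw
  have h1 : u ⬝ᵥ M *ᵥ u = ⟪v, w⟫_ℝ := by
    simp [hv, hw, PiLp.inner_apply, dotProduct, mul_comm]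
  have h2 : u ⬝ᵥ u = ⟪v, v⟫_ℝ := by
    rw [hv, PiLp.inner_apply]; simp [dotProduct, sq]
  rw [h1, h2]
  have hmv : ‖w‖ ≤ ‖M‖ * ‖v‖ := M.l2_opNorm_mulVec (x := v)
  calc ⟪v, w⟫_ℝ ≤ ‖v‖ * ‖w‖ := real_inner_le_norm _ _
    _ ≤ ‖v‖ * (‖M‖ * ‖v‖) := by gcongr
    _ ≤ ‖v‖ * (1 * ‖v‖) := by gcongr
    _ = ⟪v, v⟫_ℝ := by rw [one_mul, real_inner_self_eq_norm_mul_norm]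

/-- The discrete parallel diffusion operator
`P_∥ = (τ/2) κ H⁻¹ (I − (1/2)(P_f + P_b))` with `τ = α/Δx`, `α ≤ 0`, `Δx > 0`,
`κ ≥ 0`, `H` symmetric positive definite and `‖P_f‖, ‖P_b‖ ≤ 1` satisfies
`uᵀ ((H P_∥) + (H P_∥)ᵀ) u ≤ 0` for all `u`. -/
theorem discrete_parallel_operator_dissipative
    (n : ℕ) (hn : 1 ≤ n)
    (H : Matrix (Fin n) (Fin n) ℝ) (hHsymm : H.IsSymm)
    (hHpos : ∀ u : Fin n → ℝ, u ≠ 0 → 0 < u ⬝ᵥ H *ᵥ u)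
    (Pf Pb : Matrix (Fin n) (Fin n) ℝ)
    (hPf : ‖Pf‖ ≤ 1) (hPb : ‖Pb‖ ≤ 1)
    (κ : ℝ) (hκ : 0 ≤ κ) (Δx : ℝ) (hΔx : 0 < Δx) (α : ℝ) (hα : α ≤ 0)
    (τ : ℝ) (hτ : τ = α / Δx)
    (A Ppar : Matrix (Fin n) (Fin n) ℝ)
    (hA : A = 1 - (1 / 2 : ℝ) • (Pf + Pb))
    (hPpar : Ppar = (τ / 2 * κ) • (H⁻¹ * A)) :
    ∀ u : Fin n → ℝ, u ⬝ᵥ ((H * Ppar) + (H * Ppar)ᵀ) *ᵥ u ≤ 0 := by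
  intro u
  -- H is positive definite, hence invertible
  have hHpd : H.PosDef := by
    exact Matrix.PosDef.of_dotProduct_mulVec_pos hHsymm (fun x hx => by simpa using hHpos x hx)
  have hHinv : H * H⁻¹ = 1 := Matrix.mul_nonsing_inv H (isUnit_iff_ne_zero.mpr hHpd.det_pos.ne')
  -- c ≤ 0
  set c : ℝ := τ / 2 * κ with hc
  have hτ0 : τ ≤ 0 := by rw [hτ]; exact div_nonpos_iff.mpr (Or.inr ⟨hα, hΔx.le⟩)
  have hc0 : c ≤ 0 := mul_nonpos_of_nonpos_of_nonneg (by linarith) hκ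
  -- H * Ppar = c • A
  have hHP : H * Ppar = c • A := by
    rw [hPpar, Matrix.mul_smul, ← Matrix.mul_assoc, hHinv, Matrix.one_mul]
  -- quadratic form of A is nonneg
  have hAquad : 0 ≤ u ⬝ᵥ A *ᵥ u := by
    have hf := dot_le_of_opNorm_le_one Pf hPf u
    have hb := dot_le_of_opNorm_le_one Pb hPb u
    have : u ⬝ᵥ A *ᵥ u = u ⬝ᵥ u - (1/2 : ℝ) * (u ⬝ᵥ Pf *ᵥ u + u ⬝ᵥ Pb *ᵥ u) := by
      rw [hA]
      simp [Matrix.sub_mulVec, Matrix.smul_mulVec, Matrix.add_mulVec,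
        dotProduct_sub, dotProduct_smul, dotProduct_add, smul_eq_mul]
      ring
    linarith
  -- transpose term
  have hT : u ⬝ᵥ Aᵀ *ᵥ u = u ⬝ᵥ A *ᵥ u := by
    rw [Matrix.mulVec_transpose, dotProduct_comm, ← Matrix.dotProduct_mulVec]
  have : u ⬝ᵥ ((H * Ppar) + (H * Ppar)ᵀ) *ᵥ u
      = c * (u ⬝ᵥ A *ᵥ u) + c * (u ⬝ᵥ Aᵀ *ᵥ u) := by
    rw [hHP, Matrix.transpose_smul, Matrix.add_mulVec, dotProduct_add,
      Matrix.smul_mulVec, Matrix.smul_mulVec, dotProduct_smul,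
      dotProduct_smul, smul_eq_mul, smul_eq_mul]
  rw [this, hT]
  nlinarith
end

section
/- Let n ≥ 2. Let H be an n × n real symmetric matrix with uᵀ H u > 0 for all nonzero u ∈ ℝⁿ, let Q be an n × n real matrix with Q + Qᵀ = B, where B is the diagonal matrix with entries (−1, 0, …, 0, 1), and set D_x = H⁻¹ Q. Let M be an n × n real symmetric matrix with uᵀ M u ≥ 0 for all u ∈ ℝⁿ, let K be a diagonal matrix with nonnegative diagonal entries, and set D_xx = H⁻¹(−M + B K D_x). Let κ_∥ ≥ 0, Δx > 0, α ≤ 0, τ_∥ = α/Δx, and let P_f, P_b be n × n real matrices with Euclidean operator norms ‖P_f‖ ≤ 1 and ‖P_b‖ ≤ 1; define P_∥ = (τ_∥/2) κ_∥ H⁻¹ (I − (1/2)(P_f + P_b)). Let u : ℝ → ℝⁿ be differentiable and satisfy the semi-discrete scheme u′(t) = D_xx u(t) + τ₀ H⁻¹ B K D_x u(t) + P_∥ u(t) with penalty parameter τ₀ = −1. Then for every t, the derivative d/dt ( u(t)ᵀ H u(t) ) ≤ 0. -/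
open scoped Matrix.Norms.L2Operator

open Matrix

private lemma quad_le_of_norm_le_one {n : ℕ} (A : Matrix (Fin n) (Fin n) ℝ)
    (hA : ‖A‖ ≤ 1) (v : Fin n → ℝ) : v ⬝ᵥ A *ᵥ v ≤ v ⬝ᵥ v := by
  set x : EuclideanSpace ℝ (Fin n) := (EuclideanSpace.equiv (Fin n) ℝ).symm v with hx
  set y : EuclideanSpace ℝ (Fin n) := (EuclideanSpace.equiv (Fin n) ℝ).symm (A *ᵥ v) with hy
  have h1 : v ⬝ᵥ A *ᵥ v = (inner ℝ x y : ℝ) := by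
    simp [PiLp.inner_apply, dotProduct, hx, hy, RCLike.inner_apply, mul_comm]
  have h2 : v ⬝ᵥ v = (inner ℝ x x : ℝ) := by
    simp [PiLp.inner_apply, dotProduct, hx, RCLike.inner_apply, mul_comm, -inner_self_eq_norm_sq_to_K]
  rw [h1, h2, real_inner_self_eq_norm_mul_norm]
  have hyx : ‖y‖ ≤ ‖x‖ := by
    have := Matrix.l2_opNorm_mulVec A x
    calc ‖y‖ ≤ ‖A‖ * ‖x‖ := this
      _ ≤ 1 * ‖x‖ := by
        have : (0:ℝ) ≤ ‖x‖ := norm_nonneg _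
        nlinarith
      _ = ‖x‖ := one_mul _
  calc (inner ℝ x y : ℝ) ≤ ‖x‖ * ‖y‖ := real_inner_le_norm x y
    _ ≤ ‖x‖ * ‖x‖ := by nlinarith [norm_nonneg x]

private lemma hasDerivAt_quadratic {n : ℕ} (H : Matrix (Fin n) (Fin n) ℝ)
    (u : ℝ → Fin n → ℝ) (w : Fin n → ℝ) (t : ℝ) (hd : HasDerivAt u w t) :
    HasDerivAt (fun s => u s ⬝ᵥ H *ᵥ u s) (w ⬝ᵥ H *ᵥ u t + u t ⬝ᵥ H *ᵥ w) t := by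
  have hi : ∀ i, HasDerivAt (fun s => u s i) (w i) t := hasDerivAt_pi.1 hd
  have key : HasDerivAt (fun s => ∑ i, u s i * ∑ j, H i j * u s j)
      (∑ i, (w i * ∑ j, H i j * u t j + u t i * ∑ j, H i j * w j)) t :=
    HasDerivAt.fun_sum fun i _ =>
      (hi i).mul (HasDerivAt.fun_sum fun j _ => (hi j).const_mul (H i j))
  have hfun : (fun s => u s ⬝ᵥ H *ᵥ u s) = fun s => ∑ i, u s i * ∑ j, H i j * u s j := by
    funext s; simp [dotProduct, Matrix.mulVec]
  have hval : w ⬝ᵥ H *ᵥ u t + u t ⬝ᵥ H *ᵥ w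
      = ∑ i, (w i * ∑ j, H i j * u t j + u t i * ∑ j, H i j * w j) := by
    simp [dotProduct, Matrix.mulVec, Finset.sum_add_distrib]
  rw [hfun, hval]; exact key

private lemma dot_symm {n : ℕ} (H : Matrix (Fin n) (Fin n) ℝ) (hH : H.IsSymm)
    (v w : Fin n → ℝ) : w ⬝ᵥ H *ᵥ v = v ⬝ᵥ H *ᵥ w := by
  rw [Matrix.dotProduct_mulVec, ← Matrix.mulVec_transpose, hH, dotProduct_comm]

/-- Semi-discrete stability of the SBP-SAT approximation of the anisotropic
diffusion equation with homogeneous Neumann data: the discrete energy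
`uᵀ H u` is nonincreasing. -/
theorem sbp_sat_semidiscrete_stability
    (n : ℕ) (hn : 2 ≤ n)
    (H : Matrix (Fin n) (Fin n) ℝ) (hHsymm : H.IsSymm)
    (hHpos : ∀ v : Fin n → ℝ, v ≠ 0 → 0 < v ⬝ᵥ H *ᵥ v)
    (B : Matrix (Fin n) (Fin n) ℝ)
    (hB : B = Matrix.diagonal (fun i : Fin n =>
      if (i : ℕ) = 0 then (-1 : ℝ) else if (i : ℕ) = n - 1 then 1 else 0))
    (Q : Matrix (Fin n) (Fin n) ℝ) (hQ : Q + Qᵀ = B)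
    (Dx : Matrix (Fin n) (Fin n) ℝ) (hDx : Dx = H⁻¹ * Q)
    (M : Matrix (Fin n) (Fin n) ℝ) (hMsymm : M.IsSymm)
    (hMpos : ∀ v : Fin n → ℝ, 0 ≤ v ⬝ᵥ M *ᵥ v)
    (k : Fin n → ℝ) (hk : ∀ i, 0 ≤ k i)
    (K : Matrix (Fin n) (Fin n) ℝ) (hK : K = Matrix.diagonal k)
    (Dxx : Matrix (Fin n) (Fin n) ℝ) (hDxx : Dxx = H⁻¹ * (-M + B * K * Dx))
    (κpar : ℝ) (hκpar : 0 ≤ κpar) (Δx : ℝ) (hΔx : 0 < Δx)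
    (α : ℝ) (hα : α ≤ 0) (τpar : ℝ) (hτpar : τpar = α / Δx)
    (Pf Pb : Matrix (Fin n) (Fin n) ℝ)
    (hPf : ‖Pf‖ ≤ 1) (hPb : ‖Pb‖ ≤ 1)
    (Ppar : Matrix (Fin n) (Fin n) ℝ)
    (hPpar : Ppar = (τpar / 2 * κpar) • (H⁻¹ * (1 - (1 / 2 : ℝ) • (Pf + Pb))))
    (τ₀ : ℝ) (hτ₀ : τ₀ = -1)
    (u : ℝ → Fin n → ℝ)
    (hscheme : ∀ t : ℝ, HasDerivAt u
      (Dxx *ᵥ u t + τ₀ • ((H⁻¹ * (B * K * Dx)) *ᵥ u t) + Ppar *ᵥ u t) t) :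
    ∀ t : ℝ, deriv (fun s => u s ⬝ᵥ H *ᵥ u s) t ≤ 0 := by
  -- H is positive definite, hence invertible
  have hHherm : H.IsHermitian := by
    rwa [Matrix.IsHermitian, Matrix.conjTranspose_eq_transpose_of_trivial]
  have hHpd : H.PosDef := Matrix.PosDef.of_dotProduct_mulVec_pos hHherm (fun x hx => by simpa using hHpos x hx)
  have hHinv : H * H⁻¹ = 1 := Matrix.mul_nonsing_inv H hHpd.det_pos.ne'.isUnit
  set c : ℝ := τpar / 2 * κpar with hc
  have hcle : c ≤ 0 := by
    have hτ : τpar ≤ 0 := by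
      rw [hτpar]; exact div_nonpos_of_nonpos_of_nonneg hα hΔx.le
    rw [hc]; exact mul_nonpos_of_nonpos_of_nonneg (by linarith) hκpar
  -- matrix identities
  have e1 : H * Dxx = -M + B * K * Dx := by
    rw [hDxx, ← Matrix.mul_assoc, hHinv, Matrix.one_mul]
  have e2 : H * (H⁻¹ * (B * K * Dx)) = B * K * Dx := by
    rw [← Matrix.mul_assoc, hHinv, Matrix.one_mul]
  have e3 : H * Ppar = c • (1 - (1 / 2 : ℝ) • (Pf + Pb)) := by
    rw [hPpar, Matrix.mul_smul, ← Matrix.mul_assoc, hHinv, Matrix.one_mul]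
  intro t
  set w : Fin n → ℝ := Dxx *ᵥ u t + τ₀ • ((H⁻¹ * (B * K * Dx)) *ᵥ u t) + Ppar *ᵥ u t with hw
  have hderiv : deriv (fun s => u s ⬝ᵥ H *ᵥ u s) t = w ⬝ᵥ H *ᵥ u t + u t ⬝ᵥ H *ᵥ w :=
    (hasDerivAt_quadratic H u w t (hscheme t)).deriv
  have hHw : H *ᵥ w = -(M *ᵥ u t) + c • (u t - (1 / 2 : ℝ) • (Pf *ᵥ u t + Pb *ᵥ u t)) := by
    rw [hw]
    simp only [Matrix.mulVec_add, Matrix.mulVec_smul, Matrix.mulVec_mulVec, e1, e2, e3, hτ₀]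
    simp [Matrix.add_mulVec, Matrix.neg_mulVec, Matrix.sub_mulVec, Matrix.smul_mulVec,
      sub_eq_add_neg]
  have hdot : u t ⬝ᵥ H *ᵥ w
      = -(u t ⬝ᵥ M *ᵥ u t)
        + c * (u t ⬝ᵥ u t - (1 / 2 : ℝ) * (u t ⬝ᵥ Pf *ᵥ u t + u t ⬝ᵥ Pb *ᵥ u t)) := by
    rw [hHw]
    simp [dotProduct_add, dotProduct_smul, dotProduct_sub, dotProduct_neg, smul_eq_mul,
      mul_sub, mul_add]
  have hsymmdot : w ⬝ᵥ H *ᵥ u t = u t ⬝ᵥ H *ᵥ w := dot_symm H hHsymm (u t) w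
  have hMnn : 0 ≤ u t ⬝ᵥ M *ᵥ u t := hMpos (u t)
  have hPfle : u t ⬝ᵥ Pf *ᵥ u t ≤ u t ⬝ᵥ u t := quad_le_of_norm_le_one Pf hPf (u t)
  have hPble : u t ⬝ᵥ Pb *ᵥ u t ≤ u t ⬝ᵥ u t := quad_le_of_norm_le_one Pb hPb (u t)
  rw [hderiv, hsymmdot, hdot]
  nlinarith [mul_nonpos_of_nonpos_of_nonneg hcle
    (by linarith : (0:ℝ) ≤ u t ⬝ᵥ u t - (1 / 2 : ℝ) * (u t ⬝ᵥ Pf *ᵥ u t + u t ⬝ᵥ Pb *ᵥ u t))]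
end

section
/- Let n ≥ 2. Let H be an n × n real symmetric matrix with uᵀ H u > 0 for all nonzero u ∈ ℝⁿ, let Q be an n × n real matrix with Q + Qᵀ = B, where B is the diagonal matrix with entries (−1, 0, …, 0, 1), and set D_x = H⁻¹ Q. Let M be an n × n real symmetric matrix, let K be a diagonal matrix, and set D_xx = H⁻¹(−M + B K D_x). Let P be any n × n real matrix, and let u : ℝ → ℝⁿ be differentiable and satisfy u′(t) = D_xx u(t) + τ₀ H⁻¹ B K D_x u(t) + P u(t) with τ₀ = −1. Then for every t, d/dt ( u(t)ᵀ H u(t) ) = −2 u(t)ᵀ M u(t) + u(t)ᵀ ( (H P) + (H P)ᵀ ) u(t). -/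
open Matrix

lemma aux_quad_deriv {n : ℕ} (H : Matrix (Fin n) (Fin n) ℝ)
    (u : ℝ → Fin n → ℝ) (v : Fin n → ℝ) (t : ℝ)
    (hu : HasDerivAt u v t) :
    HasDerivAt (fun s => u s ⬝ᵥ H *ᵥ u s)
      (v ⬝ᵥ H *ᵥ u t + u t ⬝ᵥ H *ᵥ v) t := by
  have hcomp : ∀ i : Fin n, HasDerivAt (fun s => u s i) (v i) t := by
    intro i
    exact (hasDerivAt_pi.mp hu) i
  have key : ∀ i j : Fin n,
      HasDerivAt (fun s => u s i * H i j * u s j)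
        (v i * H i j * u t j + u t i * H i j * v j) t := by
    intro i j
    have := ((hcomp i).mul_const (H i j)).fun_mul (hcomp j)
    convert this using 1
  have hsum : HasDerivAt (fun s => ∑ i, ∑ j, u s i * H i j * u s j)
      (∑ i, ∑ j, (v i * H i j * u t j + u t i * H i j * v j)) t := by
    apply HasDerivAt.fun_sum
    intro i _
    exact HasDerivAt.fun_sum (fun j _ => key i j)
  have e1 : (fun s => u s ⬝ᵥ H *ᵥ u s) = (fun s => ∑ i, ∑ j, u s i * H i j * u s j) := by
    funext s
    simp [dotProduct, mulVec, Finset.mul_sum, mul_assoc]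
  have e2 : v ⬝ᵥ H *ᵥ u t + u t ⬝ᵥ H *ᵥ v
      = ∑ i, ∑ j, (v i * H i j * u t j + u t i * H i j * v j) := by
    simp [dotProduct, mulVec, Finset.mul_sum, mul_assoc, ← Finset.sum_add_distrib]
  rw [e1, e2]
  exact hsum

/-- Discrete energy identity for the SBP-SAT scheme
`u′ = D_xx u + τ₀ H⁻¹ B K D_x u + P u` with `τ₀ = −1`:
`d/dt (uᵀ H u) = −2 uᵀ M u + uᵀ ((H P) + (H P)ᵀ) u`. -/
theorem sbp_sat_discrete_energy_identity
    (n : ℕ) (hn : 2 ≤ n)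
    (H : Matrix (Fin n) (Fin n) ℝ) (hHsymm : H.IsSymm)
    (hHpos : ∀ v : Fin n → ℝ, v ≠ 0 → 0 < v ⬝ᵥ H *ᵥ v)
    (B : Matrix (Fin n) (Fin n) ℝ)
    (hB : B = Matrix.diagonal (fun i : Fin n =>
      if (i : ℕ) = 0 then (-1 : ℝ) else if (i : ℕ) = n - 1 then 1 else 0))
    (Q : Matrix (Fin n) (Fin n) ℝ) (hQ : Q + Qᵀ = B)
    (Dx : Matrix (Fin n) (Fin n) ℝ) (hDx : Dx = H⁻¹ * Q)
    (M : Matrix (Fin n) (Fin n) ℝ) (hMsymm : M.IsSymm)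
    (k : Fin n → ℝ)
    (K : Matrix (Fin n) (Fin n) ℝ) (hK : K = Matrix.diagonal k)
    (Dxx : Matrix (Fin n) (Fin n) ℝ) (hDxx : Dxx = H⁻¹ * (-M + B * K * Dx))
    (P : Matrix (Fin n) (Fin n) ℝ)
    (τ₀ : ℝ) (hτ₀ : τ₀ = -1)
    (u : ℝ → Fin n → ℝ)
    (hscheme : ∀ t : ℝ, HasDerivAt u
      (Dxx *ᵥ u t + τ₀ • ((H⁻¹ * (B * K * Dx)) *ᵥ u t) + P *ᵥ u t) t) :
    ∀ t : ℝ, deriv (fun s => u s ⬝ᵥ H *ᵥ u s) t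
      = -2 * (u t ⬝ᵥ M *ᵥ u t) + u t ⬝ᵥ ((H * P) + (H * P)ᵀ) *ᵥ u t := by
  intro t
  -- H is positive definite, hence invertible
  have hHpd : H.PosDef := by
    refine Matrix.PosDef.of_dotProduct_mulVec_pos (Matrix.isHermitian_iff_isSymm.mpr hHsymm) ?_
    intro x hx
    simpa using hHpos x hx
  have hHdet : IsUnit H.det := hHpd.det_pos.ne'.isUnit
  have hHinv : H * H⁻¹ = 1 := Matrix.mul_nonsing_inv H hHdet
  have hHinv' : H⁻¹ * H = 1 := Matrix.nonsing_inv_mul H hHdet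
  -- simplify the right-hand side of the scheme
  set A : Matrix (Fin n) (Fin n) ℝ := -(H⁻¹ * M) + P with hA
  have hAeq : Dxx *ᵥ u t + τ₀ • ((H⁻¹ * (B * K * Dx)) *ᵥ u t) + P *ᵥ u t
      = A *ᵥ u t := by
    subst hτ₀
    have : Dxx = -(H⁻¹ * M) + H⁻¹ * (B * K * Dx) := by
      rw [hDxx, Matrix.mul_add]
      simp [Matrix.mul_neg]
    rw [this]
    simp [Matrix.add_mulVec, Matrix.neg_mulVec, hA]
    try abel
  have hu : HasDerivAt u (A *ᵥ u t) t := hAeq ▸ hscheme t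
  have hder := aux_quad_deriv H u (A *ᵥ u t) t hu
  rw [hder.deriv]
  -- now pure matrix algebra
  have hHT : Hᵀ = H := hHsymm
  have hHiT : (H⁻¹)ᵀ = H⁻¹ := by
    rw [Matrix.transpose_nonsing_inv, hHT]
  have hMT : Mᵀ = M := hMsymm
  -- second term: uᵀ H A u
  have h2 : u t ⬝ᵥ H *ᵥ (A *ᵥ u t) = u t ⬝ᵥ (H * A) *ᵥ u t := by
    rw [Matrix.mulVec_mulVec]
  have hHA : H * A = -M + H * P := by
    rw [hA, Matrix.mul_add, Matrix.mul_neg, ← Matrix.mul_assoc, hHinv, Matrix.one_mul]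
  -- first term: (A u)ᵀ H u = uᵀ Aᵀ H u
  have h1 : (A *ᵥ u t) ⬝ᵥ H *ᵥ u t = u t ⬝ᵥ (Aᵀ * H) *ᵥ u t := by
    conv_rhs => rw [← Matrix.mulVec_mulVec, Matrix.dotProduct_mulVec,
      Matrix.vecMul_transpose]
  have hATH : Aᵀ * H = -M + (H * P)ᵀ := by
    rw [hA, Matrix.transpose_add, Matrix.transpose_neg, Matrix.transpose_mul,
      hMT, hHiT, Matrix.add_mul, Matrix.neg_mul, Matrix.mul_assoc, hHinv',
      Matrix.mul_one, Matrix.transpose_mul, hHT]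
  rw [h1, h2, hHA, hATH]
  simp only [Matrix.add_mulVec, Matrix.neg_mulVec, dotProduct_add, dotProduct_neg]
  ring
end

section
/- Let n ≥ 2. Under the hypotheses of the semi-discrete stability theorem — H an n × n real symmetric matrix with uᵀ H u > 0 for all nonzero u, Q with Q + Qᵀ = B = diag(−1,0,…,0,1), D_x = H⁻¹Q, M symmetric with uᵀ M u ≥ 0 for all u, K diagonal with nonnegative entries, D_xx = H⁻¹(−M + B K D_x), κ_∥ ≥ 0, τ_∥ = α/Δx with Δx > 0 and α ≤ 0, P_f and P_b with Euclidean operator norms at most 1, P_∥ = (τ_∥/2) κ_∥ H⁻¹ (I − (1/2)(P_f + P_b)), and u : ℝ → ℝⁿ differentiable satisfying u′(t) = D_xx u(t) − H⁻¹ B K D_x u(t) + P_∥ u(t) — it holds for all t ≥ 0 that u(t)ᵀ H u(t) ≤ u(0)ᵀ H u(0). -/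
open scoped Matrix.Norms.L2Operator

open Matrix

open scoped RealInnerProductSpace in
private lemma quad_le_of_opNorm_le {n : ℕ} (P : Matrix (Fin n) (Fin n) ℝ)
    (hP : ‖P‖ ≤ 1) (w : Fin n → ℝ) : w ⬝ᵥ P *ᵥ w ≤ w ⬝ᵥ w := by
  set x : EuclideanSpace ℝ (Fin n) := (EuclideanSpace.equiv (Fin n) ℝ).symm w with hx
  have h1 : w ⬝ᵥ P *ᵥ w = ⟪x, (EuclideanSpace.equiv (Fin n) ℝ).symm (P *ᵥ w)⟫ := by
    rw [EuclideanSpace.inner_eq_star_dotProduct]; simp [hx]; exact dotProduct_comm _ _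
  have h2 : w ⬝ᵥ w = ⟪x, x⟫ := by
    rw [EuclideanSpace.inner_eq_star_dotProduct]; simp [hx]
  rw [h1, h2]
  have h3 := real_inner_le_norm x ((EuclideanSpace.equiv (Fin n) ℝ).symm (P *ᵥ w))
  have h4 := P.l2_opNorm_mulVec x
  calc ⟪x, (EuclideanSpace.equiv (Fin n) ℝ).symm (P *ᵥ w)⟫
      ≤ ‖x‖ * ‖(EuclideanSpace.equiv (Fin n) ℝ).symm (P *ᵥ w)‖ := h3
    _ ≤ ‖x‖ * (‖P‖ * ‖x‖) := by
        apply mul_le_mul_of_nonneg_left _ (norm_nonneg _)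
        convert h4 using 2 <;> rfl
    _ ≤ ‖x‖ * ‖x‖ := by nlinarith [norm_nonneg x]
    _ = ⟪x, x⟫ := (real_inner_self_eq_norm_mul_norm x).symm

private lemma hasDerivAt_quadForm {n : ℕ} (A : Matrix (Fin n) (Fin n) ℝ)
    (u : ℝ → Fin n → ℝ) (u' : Fin n → ℝ) (t : ℝ) (hu : HasDerivAt u u' t) :
    HasDerivAt (fun s => u s ⬝ᵥ A *ᵥ u s) (u' ⬝ᵥ A *ᵥ u t + u t ⬝ᵥ A *ᵥ u') t := by
  have h1 : ∀ i, HasDerivAt (fun s => u s i) (u' i) t := hasDerivAt_pi.mp hu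
  have h2 : ∀ i, HasDerivAt (fun s => ∑ j, A i j * u s j) (∑ j, A i j * u' j) t :=
    fun i => HasDerivAt.fun_sum fun j _ => (h1 j).const_mul _
  have h3 : HasDerivAt (fun s => ∑ i, u s i * ∑ j, A i j * u s j)
      (∑ i, (u' i * (∑ j, A i j * u t j) + u t i * ∑ j, A i j * u' j)) t :=
    HasDerivAt.fun_sum fun i _ => (h1 i).mul (h2 i)
  convert h3 using 1
  simp only [_root_.dotProduct, mulVec]
  exact Finset.sum_add_distrib.symm

/-- Integrated form of the semi-discrete stability estimate for the SBP-SAT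
approximation: `u(t)ᵀ H u(t) ≤ u(0)ᵀ H u(0)` for all `t ≥ 0`. -/
theorem sbp_sat_semidiscrete_energy_bound
    (n : ℕ) (hn : 2 ≤ n)
    (H : Matrix (Fin n) (Fin n) ℝ) (hHsymm : H.IsSymm)
    (hHpos : ∀ v : Fin n → ℝ, v ≠ 0 → 0 < v ⬝ᵥ H *ᵥ v)
    (B : Matrix (Fin n) (Fin n) ℝ)
    (hB : B = Matrix.diagonal (fun i : Fin n =>
      if (i : ℕ) = 0 then (-1 : ℝ) else if (i : ℕ) = n - 1 then 1 else 0))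
    (Q : Matrix (Fin n) (Fin n) ℝ) (hQ : Q + Qᵀ = B)
    (Dx : Matrix (Fin n) (Fin n) ℝ) (hDx : Dx = H⁻¹ * Q)
    (M : Matrix (Fin n) (Fin n) ℝ) (hMsymm : M.IsSymm)
    (hMpos : ∀ v : Fin n → ℝ, 0 ≤ v ⬝ᵥ M *ᵥ v)
    (k : Fin n → ℝ) (hk : ∀ i, 0 ≤ k i)
    (K : Matrix (Fin n) (Fin n) ℝ) (hK : K = Matrix.diagonal k)
    (Dxx : Matrix (Fin n) (Fin n) ℝ) (hDxx : Dxx = H⁻¹ * (-M + B * K * Dx))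
    (κpar : ℝ) (hκpar : 0 ≤ κpar) (Δx : ℝ) (hΔx : 0 < Δx)
    (α : ℝ) (hα : α ≤ 0) (τpar : ℝ) (hτpar : τpar = α / Δx)
    (Pf Pb : Matrix (Fin n) (Fin n) ℝ)
    (hPf : ‖Pf‖ ≤ 1) (hPb : ‖Pb‖ ≤ 1)
    (Ppar : Matrix (Fin n) (Fin n) ℝ)
    (hPpar : Ppar = (τpar / 2 * κpar) • (H⁻¹ * (1 - (1 / 2 : ℝ) • (Pf + Pb))))
    (u : ℝ → Fin n → ℝ)
    (hscheme : ∀ t : ℝ, HasDerivAt u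
      (Dxx *ᵥ u t - (H⁻¹ * (B * K * Dx)) *ᵥ u t + Ppar *ᵥ u t) t) :
    ∀ t ≥ (0 : ℝ), u t ⬝ᵥ H *ᵥ u t ≤ u 0 ⬝ᵥ H *ᵥ u 0 := by
  -- H is invertible
  have hdet : H.det ≠ 0 := by
    intro hd
    obtain ⟨v, hv, hHv⟩ := (Matrix.exists_mulVec_eq_zero_iff).mpr hd
    have := hHpos v hv
    rw [hHv] at this
    simp at this
  have hHinv : H * H⁻¹ = 1 := Matrix.mul_nonsing_inv H (isUnit_iff_ne_zero.mpr hdet)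
  set c : ℝ := τpar / 2 * κpar with hc
  have hτ : τpar ≤ 0 := by rw [hτpar]; exact div_nonpos_of_nonpos_of_nonneg hα hΔx.le
  have hcle : c ≤ 0 := by nlinarith
  set S : Matrix (Fin n) (Fin n) ℝ := 1 - (1 / 2 : ℝ) • (Pf + Pb) with hS
  -- matrix simplifications
  have m1 : H * Dxx = -M + B * K * Dx := by rw [hDxx, ← mul_assoc, hHinv, one_mul]
  have m2 : H * (H⁻¹ * (B * K * Dx)) = B * K * Dx := by rw [← mul_assoc, hHinv, one_mul]
  have m3 : H * Ppar = c • S := by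
    rw [hPpar, Matrix.mul_smul, ← mul_assoc, hHinv, one_mul]
  -- the key pointwise bound
  have key : ∀ w : Fin n → ℝ,
      w ⬝ᵥ H *ᵥ (Dxx *ᵥ w - (H⁻¹ * (B * K * Dx)) *ᵥ w + Ppar *ᵥ w) ≤ 0 := by
    intro w
    have e1 : H *ᵥ (Dxx *ᵥ w - (H⁻¹ * (B * K * Dx)) *ᵥ w + Ppar *ᵥ w)
        = (-M) *ᵥ w + c • (S *ᵥ w) := by
      rw [Matrix.mulVec_add, Matrix.mulVec_sub, Matrix.mulVec_mulVec,
        Matrix.mulVec_mulVec, Matrix.mulVec_mulVec, m1, m2, m3,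
        Matrix.add_mulVec, Matrix.smul_mulVec]
      abel
    rw [e1, dotProduct_add, dotProduct_smul]
    have eS : S *ᵥ w = w - (1 / 2 : ℝ) • (Pf *ᵥ w + Pb *ᵥ w) := by
      rw [hS, Matrix.sub_mulVec, Matrix.one_mulVec, Matrix.smul_mulVec,
        Matrix.add_mulVec]
    have eSd : w ⬝ᵥ S *ᵥ w
        = w ⬝ᵥ w - (1 / 2 : ℝ) * (w ⬝ᵥ Pf *ᵥ w + w ⬝ᵥ Pb *ᵥ w) := by
      rw [eS, dotProduct_sub, dotProduct_smul, dotProduct_add]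
      simp [smul_eq_mul]
    have hf := quad_le_of_opNorm_le Pf hPf w
    have hb := quad_le_of_opNorm_le Pb hPb w
    have hM := hMpos w
    have hneg : w ⬝ᵥ (-M) *ᵥ w = -(w ⬝ᵥ M *ᵥ w) := by
      rw [Matrix.neg_mulVec, dotProduct_neg]
    have hSpos : 0 ≤ w ⬝ᵥ S *ᵥ w := by rw [eSd]; linarith
    rw [hneg, smul_eq_mul]
    nlinarith
  -- symmetry of the quadratic form
  have sym : ∀ a b : Fin n → ℝ, a ⬝ᵥ H *ᵥ b = b ⬝ᵥ H *ᵥ a := by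
    intro a b
    calc a ⬝ᵥ H *ᵥ b = (a ᵥ* H) ⬝ᵥ b := Matrix.dotProduct_mulVec a H b
      _ = (H *ᵥ a) ⬝ᵥ b := by nth_rewrite 1 [← hHsymm]; rw [Matrix.vecMul_transpose]
      _ = b ⬝ᵥ H *ᵥ a := dotProduct_comm _ _
  -- energy function
  set E : ℝ → ℝ := fun t => u t ⬝ᵥ H *ᵥ u t with hE
  have hEderiv : ∀ t : ℝ, HasDerivAt E
      ((Dxx *ᵥ u t - (H⁻¹ * (B * K * Dx)) *ᵥ u t + Ppar *ᵥ u t) ⬝ᵥ H *ᵥ u t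
        + u t ⬝ᵥ H *ᵥ (Dxx *ᵥ u t - (H⁻¹ * (B * K * Dx)) *ᵥ u t + Ppar *ᵥ u t)) t :=
    fun t => hasDerivAt_quadForm H u _ t (hscheme t)
  have hmono : Antitone E := by
    apply antitone_of_deriv_nonpos (fun t => (hEderiv t).differentiableAt)
    intro t
    rw [(hEderiv t).deriv]
    have := key (u t)
    have hsym := sym (Dxx *ᵥ u t - (H⁻¹ * (B * K * Dx)) *ᵥ u t + Ppar *ᵥ u t) (u t)
    linarith [hsym ▸ this]
  intro t ht
  exact hmono ht
end
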